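/- Let {φ_w}_{w∈𝕋} be a family of N-functions such that w ↦ φ_w(t) is Borel for every t ≥ 0, and suppose there is t' > 0 such that for every s ∈ (0,t') the functions w ↦ log φ_w^{-1}(s) and w ↦ log (φ_w^*)^{-1}(s) are integrable on 𝕋. Fix z = re^{iθ} in the open unit disk and let φ_z be an N-function satisfying φ_z^{-1}(s) = exp((1/2π)∫_{−π}^{π} P(r, θ−u) log φ_{e^{iu}}^{-1}(s) du) for all s ∈ (0,t'). Then for every s ∈ (0,t'): (φ_z^*)^{-1}(s) ≤ 2·exp((1/2π)∫_{−π}^{π} P(r, θ−u) log (φ_{e^{iu}}^*)^{-1}(s) du). -/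

import Mathlib

open MeasureTheory Real Set Filter
open scoped ENNReal

noncomputable section

/-- An Orlicz function: convex, nondecreasing and nonnegative on `[0,∞)`, vanishing at
`0` and tending to `∞` at `∞`. -/
def IsOrliczFunction (φ : ℝ → ℝ) : Prop :=
  ConvexOn ℝ (Set.Ici 0) φ ∧ MonotoneOn φ (Set.Ici 0) ∧ φ 0 = 0 ∧
    (∀ t, 0 ≤ t → 0 ≤ φ t) ∧ Filter.Tendsto φ Filter.atTop Filter.atTop

/-- Nondegenerate: positive for positive arguments. -/
def IsNondegenerate (φ : ℝ → ℝ) : Prop := ∀ t, 0 < t → 0 < φ t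

/-- An N-function: a nondegenerate Orlicz function with `φ(t)/t → 0` as `t → 0⁺` and
`φ(t)/t → ∞` as `t → ∞`. -/
def IsNFunction (φ : ℝ → ℝ) : Prop :=
  IsOrliczFunction φ ∧ IsNondegenerate φ ∧
    Filter.Tendsto (fun t => φ t / t) (nhdsWithin 0 (Set.Ioi 0)) (nhds 0) ∧
    Filter.Tendsto (fun t => φ t / t) Filter.atTop Filter.atTop

/-- The generalized inverse `φ⁻¹(s) = sup {t ≥ 0 : φ t ≤ s}`. -/
def ginv (φ : ℝ → ℝ) (s : ℝ) : ℝ := sSup {t : ℝ | 0 ≤ t ∧ φ t ≤ s}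

/-- The conjugate (Legendre–Young) function `φ*(y) = sup{xy - φ(x) : 0 < x < ∞}`
(real-valued; finite for N-functions). -/
def youngConj (φ : ℝ → ℝ) (y : ℝ) : ℝ :=
  sSup {z : ℝ | ∃ x : ℝ, 0 < x ∧ z = x * y - φ x}

/-- The Poisson kernel `P(r,t) = (1 - r²)/(1 - 2r cos t + r²)`. -/
def poissonKernelRT (r t : ℝ) : ℝ := (1 - r ^ 2) / (1 - 2 * r * Real.cos t + r ^ 2)

/-! For every `w`, duality gives `s ≤ φ_w⁻¹(s) (φ_w^*)⁻¹(s)`. Taking logarithms and averaging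
against the Poisson kernel, which integrates to `2π`, yields
`log s ≤ log φ_z⁻¹(s) + (1/2π) ∫ P(r, θ - u) log (φ_{e^{iu}}^*)⁻¹(s) du`. The other half of the
duality for `φ_z`, namely `φ_z⁻¹(s) (φ_z^*)⁻¹(s) ≤ 2s` (Young's inequality at the two inverses),
turns this into the estimate. -/

open Topology

section NFunction

variable {φ ψ : ℝ → ℝ} {s : ℝ}

theorem IsNFunction.convexOn (h : IsNFunction φ) : ConvexOn ℝ (Ici 0) φ := h.1.1

theorem IsNFunction.map_zero (h : IsNFunction φ) : φ 0 = 0 := h.1.2.2.1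

theorem IsNFunction.nonneg (h : IsNFunction φ) {t : ℝ} (ht : 0 ≤ t) : 0 ≤ φ t :=
  h.1.2.2.2.1 t ht

theorem IsNFunction.tendsto_atTop (h : IsNFunction φ) : Tendsto φ atTop atTop := h.1.2.2.2.2

theorem IsNFunction.continuousOn_Ioi (h : IsNFunction φ) : ContinuousOn φ (Ioi 0) :=
  (h.convexOn.subset Ioi_subset_Ici_self (convex_Ioi 0)).continuousOn isOpen_Ioi

theorem IsNFunction.tendsto_nhdsGT_zero (h : IsNFunction φ) : Tendsto φ (𝓝[>] 0) (𝓝 0) := by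
  have hprod := h.2.2.1.mul (tendsto_nhdsWithin_of_tendsto_nhds (tendsto_id (x := 𝓝 (0 : ℝ))))
  rw [mul_zero] at hprod
  refine hprod.congr' (eventually_nhdsWithin_of_forall fun t (ht : 0 < t) => ?_)
  exact div_mul_cancel₀ (φ t) ht.ne'

theorem IsNFunction.div_le_div_of_le (h : IsNFunction φ) {x y : ℝ} (hx : 0 < x) (hxy : x ≤ y) :
    φ x / x ≤ φ y / y := by
  simpa [h.map_zero] using h.convexOn.secant_mono self_mem_Ici (mem_Ici.2 hx.le)
    (mem_Ici.2 (hx.le.trans hxy)) hx.ne' (hx.trans_le hxy).ne' hxy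

theorem youngConj_bddAbove (h : IsNFunction φ) (y : ℝ) :
    BddAbove {z : ℝ | ∃ x : ℝ, 0 < x ∧ z = x * y - φ x} := by
  obtain ⟨M, hM⟩ := eventually_atTop.1 (h.2.2.2.eventually_ge_atTop |y|)
  refine ⟨max M 0 * |y|, ?_⟩
  rintro z ⟨x, hx, rfl⟩
  have hxy : x * y ≤ x * |y| := mul_le_mul_of_nonneg_left (le_abs_self y) hx.le
  rcases le_total x (max M 0) with hxM | hxM
  · nlinarith [h.nonneg hx.le, abs_nonneg y]
  · have : |y| * x ≤ φ x := (le_div_iff₀ hx).1 (hM x ((le_max_left M 0).trans hxM))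
    nlinarith [abs_nonneg y, le_max_right M 0]

theorem IsNFunction.le_youngConj (h : IsNFunction φ) {x : ℝ} (hx : 0 < x) (y : ℝ) :
    x * y - φ x ≤ youngConj φ y :=
  le_csSup (youngConj_bddAbove h y) ⟨x, hx, rfl⟩

theorem youngConj_le {y c : ℝ} (hc : ∀ x, 0 < x → x * y - φ x ≤ c) : youngConj φ y ≤ c :=
  csSup_le ⟨1 * y - φ 1, 1, one_pos, rfl⟩ fun _ ⟨x, hx, hz⟩ => hz ▸ hc x hx

theorem IsNFunction.convexOn_youngConj (h : IsNFunction φ) : ConvexOn ℝ univ (youngConj φ) := by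
  refine ⟨convex_univ, fun y₁ _ y₂ _ a b ha hb hab => youngConj_le fun x hx => ?_⟩
  have h₁ := mul_le_mul_of_nonneg_left (h.le_youngConj hx y₁) ha
  have h₂ := mul_le_mul_of_nonneg_left (h.le_youngConj hx y₂) hb
  simp only [smul_eq_mul]
  linear_combination h₁ + h₂ + φ x * hab

theorem IsNFunction.continuous_youngConj (h : IsNFunction φ) : Continuous (youngConj φ) :=
  continuousOn_univ.1 (h.convexOn_youngConj.continuousOn isOpen_univ)

theorem IsNFunction.tendsto_youngConj_atTop (h : IsNFunction φ) :
    Tendsto (youngConj φ) atTop atTop :=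
  tendsto_atTop_mono (fun y => by simpa [sub_eq_add_neg] using h.le_youngConj one_pos y)
    (tendsto_atTop_add_const_right _ (-φ 1) tendsto_id)

theorem youngConj_zero_nonpos (h : ∀ x, 0 < x → 0 ≤ φ x) : youngConj φ 0 ≤ 0 :=
  youngConj_le fun x hx => by simpa using h x hx

theorem exists_pos_le_of_tendsto_nhdsGT {a : ℝ} (hψ : Tendsto ψ (𝓝[>] 0) (𝓝 a)) (has : a < s) :
    ∃ t, 0 < t ∧ ψ t ≤ s :=
  (((hψ.eventually (gt_mem_nhds has)).and self_mem_nhdsWithin).exists).imp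
    fun _ ht => ⟨ht.2, ht.1.le⟩

theorem IsNFunction.exists_pos_le (h : IsNFunction φ) (hs : 0 < s) : ∃ t, 0 < t ∧ φ t ≤ s :=
  exists_pos_le_of_tendsto_nhdsGT h.tendsto_nhdsGT_zero hs

theorem IsNFunction.exists_pos_youngConj_le (h : IsNFunction φ) (hs : 0 < s) :
    ∃ y, 0 < y ∧ youngConj φ y ≤ s :=
  exists_pos_le_of_tendsto_nhdsGT ((h.continuous_youngConj.tendsto 0).mono_left nhdsWithin_le_nhds)
    ((youngConj_zero_nonpos fun _ hx => h.nonneg hx.le).trans_lt hs)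

end NFunction

section GeneralizedInverse

variable {ψ : ℝ → ℝ} {s : ℝ}

theorem ginv_bddAbove (hψ : Tendsto ψ atTop atTop) (s : ℝ) :
    BddAbove {t : ℝ | 0 ≤ t ∧ ψ t ≤ s} := by
  obtain ⟨M, hM⟩ := eventually_atTop.1 (hψ.eventually_gt_atTop s)
  exact ⟨M, fun t ht => not_lt.1 fun hMt => (hM t hMt.le).not_ge ht.2⟩

theorem le_ginv (hψ : Tendsto ψ atTop atTop) {t : ℝ} (ht : 0 ≤ t) (hts : ψ t ≤ s) :
    t ≤ ginv ψ s :=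
  le_csSup (ginv_bddAbove hψ s) ⟨ht, hts⟩

theorem ginv_pos (hψ : Tendsto ψ atTop atTop) (hex : ∃ t, 0 < t ∧ ψ t ≤ s) : 0 < ginv ψ s :=
  let ⟨_, ht, hts⟩ := hex
  ht.trans_le (le_ginv hψ ht.le hts)

theorem apply_ginv (hc : ContinuousOn ψ (Ioi 0)) (hψ : Tendsto ψ atTop atTop)
    (hex : ∃ t, 0 < t ∧ ψ t ≤ s) : ψ (ginv ψ s) = s := by
  set S := {t : ℝ | 0 ≤ t ∧ ψ t ≤ s}
  have hpos := ginv_pos hψ hex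
  have hcont : ContinuousAt ψ (ginv ψ s) := hc.continuousAt (Ioi_mem_nhds hpos)
  obtain ⟨t₀, ht₀, ht₀s⟩ := hex
  have hS : S.Nonempty := ⟨t₀, ht₀.le, ht₀s⟩
  refine le_antisymm ?_ (not_lt.1 fun hlt => ?_)
  · exact ContinuousWithinAt.closure_le (csSup_mem_closure hS (ginv_bddAbove hψ s))
      hcont.continuousWithinAt continuousWithinAt_const fun t ht => ht.2
  · -- `ψ < s` just to the right of `ginv ψ s` would put larger points into `S`
    obtain ⟨t, hts, hgt⟩ := ((hcont.eventually (gt_mem_nhds hlt)).filter_mono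
      nhdsWithin_le_nhds |>.and (self_mem_nhdsWithin (s := Ioi (ginv ψ s)))).exists
    exact (le_ginv hψ (hpos.le.trans (le_of_lt hgt)) hts.le).not_gt hgt

end GeneralizedInverse

section Duality

variable {φ : ℝ → ℝ} {s : ℝ}

theorem IsNFunction.ginv_pos (h : IsNFunction φ) (hs : 0 < s) : 0 < ginv φ s :=
  _root_.ginv_pos h.tendsto_atTop (h.exists_pos_le hs)

theorem IsNFunction.apply_ginv (h : IsNFunction φ) (hs : 0 < s) : φ (ginv φ s) = s :=
  _root_.apply_ginv h.continuousOn_Ioi h.tendsto_atTop (h.exists_pos_le hs)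

theorem IsNFunction.ginv_youngConj_pos (h : IsNFunction φ) (hs : 0 < s) :
    0 < ginv (youngConj φ) s :=
  _root_.ginv_pos h.tendsto_youngConj_atTop (h.exists_pos_youngConj_le hs)

theorem IsNFunction.youngConj_ginv_youngConj (h : IsNFunction φ) (hs : 0 < s) :
    youngConj φ (ginv (youngConj φ) s) = s :=
  _root_.apply_ginv h.continuous_youngConj.continuousOn h.tendsto_youngConj_atTop
    (h.exists_pos_youngConj_le hs)

theorem IsNFunction.le_ginv_mul_ginv_youngConj (h : IsNFunction φ) (hs : 0 < s) :
    s ≤ ginv φ s * ginv (youngConj φ) s := by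
  set a := ginv φ s
  have ha : 0 < a := h.ginv_pos hs
  have hφa : φ a = s := h.apply_ginv hs
  -- `φ x / x` is nondecreasing and equals `s / a` at `x = a`, so `x * (s / a) ≤ max s (φ x)`
  have hconj : youngConj φ (s / a) ≤ s := youngConj_le fun x hx => by
    rcases le_total x a with hxa | hax
    · have : x * (s / a) ≤ a * (s / a) := by gcongr
      rw [mul_div_cancel₀ s ha.ne'] at this
      linarith [h.nonneg hx.le]
    · have := h.div_le_div_of_le ha hax
      rw [hφa, le_div_iff₀ hx, mul_comm] at this
      linarith
  calc s = a * (s / a) := (mul_div_cancel₀ s ha.ne').symm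
    _ ≤ a * ginv (youngConj φ) s :=
      mul_le_mul_of_nonneg_left (le_ginv h.tendsto_youngConj_atTop (by positivity) hconj) ha.le

theorem IsNFunction.ginv_mul_ginv_youngConj_le (h : IsNFunction φ) (hs : 0 < s) :
    ginv φ s * ginv (youngConj φ) s ≤ 2 * s := by
  have := h.le_youngConj (h.ginv_pos hs) (ginv (youngConj φ) s)
  rw [h.apply_ginv hs, h.youngConj_ginv_youngConj hs] at this
  linarith

end Duality

section PoissonKernel

variable {r : ℝ}

theorem one_sub_mul_cos_pos (hr : |r| < 1) (t : ℝ) : 0 < 1 - r * cos t := by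
  have : r * cos t ≤ |r| :=
    (le_abs_self _).trans (by simpa [abs_mul] using mul_le_of_le_one_right (abs_nonneg r) (abs_cos_le_one t))
  linarith

theorem poissonKernelRT_denom_pos (hr : |r| < 1) (t : ℝ) : 0 < 1 - 2 * r * cos t + r ^ 2 := by
  have := one_sub_mul_cos_pos hr t
  nlinarith [sin_sq_add_cos_sq t, sq_nonneg (r * sin t)]

theorem poissonKernelRT_nonneg (hr : |r| < 1) (t : ℝ) : 0 ≤ poissonKernelRT r t := by
  have : r ^ 2 < 1 := by rw [← sq_abs]; nlinarith [abs_nonneg r]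
  exact div_nonneg (by linarith) (poissonKernelRT_denom_pos hr t).le

theorem continuous_poissonKernelRT (hr : |r| < 1) : Continuous (poissonKernelRT r) :=
  Continuous.div (by fun_prop) (by fun_prop) fun t => (poissonKernelRT_denom_pos hr t).ne'

theorem hasDerivAt_poissonKernelRT_primitive (hr : |r| < 1) (t : ℝ) :
    HasDerivAt (fun t => t + 2 * arctan (r * sin t / (1 - r * cos t))) (poissonKernelRT r t) t := by
  have hden := one_sub_mul_cos_pos hr t
  have hQ := poissonKernelRT_denom_pos hr t
  have hquot := ((hasDerivAt_sin t).const_mul r).div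
    (((hasDerivAt_cos t).const_mul r).const_sub 1) hden.ne'
  refine ((hasDerivAt_id t).add (hquot.arctan.const_mul 2)).congr_deriv ?_
  have hsin : sin t ^ 2 = 1 - cos t ^ 2 := by linarith [sin_sq_add_cos_sq t]
  simp only [poissonKernelRT, Pi.div_apply]
  rw [eq_div_iff hQ.ne']
  field_simp
  ring_nf
  simp only [hsin]
  ring

theorem integral_poissonKernelRT (hr : |r| < 1) (θ : ℝ) :
    ∫ u in (-π)..π, poissonKernelRT r (θ - u) = 2 * π := by
  have hF : ∀ u ∈ uIcc (-π) π, HasDerivAt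
      (fun u => -((θ - u) + 2 * arctan (r * sin (θ - u) / (1 - r * cos (θ - u)))))
      (poissonKernelRT r (θ - u)) u := fun u _ =>
    (((hasDerivAt_poissonKernelRT_primitive hr (θ - u)).comp u
      ((hasDerivAt_id u).const_sub θ)).neg).congr_deriv (by ring)
  rw [intervalIntegral.integral_eq_sub_of_hasDerivAt hF
    (((continuous_poissonKernelRT hr).comp (continuous_sub_left θ)).intervalIntegrable _ _)]
  simp only [sub_neg_eq_add, sin_sub_pi, cos_sub_pi, sin_add_pi, cos_add_pi]
  ring

theorem le_poissonAverage_add (hr : |r| < 1) (θ : ℝ) {f g : ℝ → ℝ} {c : ℝ}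
    (hf : IntervalIntegrable f volume (-π) π) (hg : IntervalIntegrable g volume (-π) π)
    (hfg : ∀ u, c ≤ f u + g u) :
    c ≤ 1 / (2 * π) * (∫ u in (-π)..π, poissonKernelRT r (θ - u) * f u) +
      1 / (2 * π) * ∫ u in (-π)..π, poissonKernelRT r (θ - u) * g u := by
  have hP : Continuous fun u => poissonKernelRT r (θ - u) :=
    (continuous_poissonKernelRT hr).comp (continuous_sub_left θ)
  have hPf := hf.continuousOn_mul hP.continuousOn
  have hPg := hg.continuousOn_mul hP.continuousOn
  have hmono := intervalIntegral.integral_mono_on (by linarith [pi_pos])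
    ((hP.intervalIntegrable (-π) π).mul_const c) (hPf.add hPg)
    fun u _ => by
      rw [← mul_add]
      exact mul_le_mul_of_nonneg_left (hfg u) (poissonKernelRT_nonneg hr _)
  rw [intervalIntegral.integral_mul_const, integral_poissonKernelRT hr,
    intervalIntegral.integral_add hPf hPg] at hmono
  rw [← mul_add, div_mul_eq_mul_div, one_mul, le_div_iff₀ (by positivity)]
  simpa [mul_comm] using hmono

end PoissonKernel

theorem statement10_general (φ : ℝ → ℝ → ℝ)
    (hN : ∀ w : ℝ, IsNFunction (φ w))
    (t' : ℝ)
    (hint : ∀ s ∈ Set.Ioo (0 : ℝ) t',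
      IntervalIntegrable (fun w => Real.log (ginv (φ w) s)) volume (-π) π)
    (hint' : ∀ s ∈ Set.Ioo (0 : ℝ) t',
      IntervalIntegrable (fun w => Real.log (ginv (youngConj (φ w)) s)) volume (-π) π)
    (r θ : ℝ) (hr0 : 0 ≤ r) (hr1 : r < 1)
    (φz : ℝ → ℝ) (hφz : IsNFunction φz)
    (hinv : ∀ s ∈ Set.Ioo (0 : ℝ) t', ginv φz s = Real.exp ((1 / (2 * π)) *
      ∫ u in (-π)..π, poissonKernelRT r (θ - u) * Real.log (ginv (φ u) s))) :
    ∀ s ∈ Set.Ioo (0 : ℝ) t', ginv (youngConj φz) s ≤ 2 * Real.exp ((1 / (2 * π)) *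
      ∫ u in (-π)..π, poissonKernelRT r (θ - u) * Real.log (ginv (youngConj (φ u)) s)) := by
  intro s hs
  have hs0 : 0 < s := hs.1
  set A := ∫ u in (-π)..π, poissonKernelRT r (θ - u) * log (ginv (φ u) s)
  set B := ∫ u in (-π)..π, poissonKernelRT r (θ - u) * log (ginv (youngConj (φ u)) s)
  have hlog : log s ≤ 1 / (2 * π) * A + 1 / (2 * π) * B :=
    le_poissonAverage_add (abs_lt.2 ⟨by linarith, hr1⟩) θ (hint s hs) (hint' s hs) fun u => by
      rw [← log_mul ((hN u).ginv_pos hs0).ne' ((hN u).ginv_youngConj_pos hs0).ne']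
      exact log_le_log hs0 ((hN u).le_ginv_mul_ginv_youngConj hs0)
  calc ginv (youngConj φz) s ≤ 2 * s / ginv φz s := by
        rw [le_div_iff₀ (hφz.ginv_pos hs0), mul_comm]
        exact hφz.ginv_mul_ginv_youngConj_le hs0
    _ = 2 * exp (log s - 1 / (2 * π) * A) := by
        rw [hinv s hs, exp_sub, exp_log hs0]
        ring
    _ ≤ 2 * exp (1 / (2 * π) * B) := by gcongr; linarith

/-- Duality estimate for the interpolated Orlicz function: if
`φ_z⁻¹(s) = exp((1/2π)∫ P(r,θ-u) log φ_{e^{iu}}⁻¹(s) du)` on `(0,t')`, then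
`(φ_z^*)⁻¹(s) ≤ 2 exp((1/2π)∫ P(r,θ-u) log (φ_{e^{iu}}^*)⁻¹(s) du)` on `(0,t')`. -/
theorem statement10 (φ : ℝ → ℝ → ℝ)
    (hN : ∀ w : ℝ, IsNFunction (φ w))
    (hper : ∀ t : ℝ, Function.Periodic (fun w => φ w t) (2 * π))
    (hborel : ∀ t : ℝ, 0 ≤ t → Measurable fun w => φ w t)
    (t' : ℝ) (ht' : 0 < t')
    (hint : ∀ s ∈ Set.Ioo (0 : ℝ) t',
      IntervalIntegrable (fun w => Real.log (ginv (φ w) s)) volume (-π) π)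
    (hint' : ∀ s ∈ Set.Ioo (0 : ℝ) t',
      IntervalIntegrable (fun w => Real.log (ginv (youngConj (φ w)) s)) volume (-π) π)
    (r θ : ℝ) (hr0 : 0 ≤ r) (hr1 : r < 1)
    (φz : ℝ → ℝ) (hφz : IsNFunction φz)
    (hinv : ∀ s ∈ Set.Ioo (0 : ℝ) t', ginv φz s = Real.exp ((1 / (2 * π)) *
      ∫ u in (-π)..π, poissonKernelRT r (θ - u) * Real.log (ginv (φ u) s))) :
    ∀ s ∈ Set.Ioo (0 : ℝ) t', ginv (youngConj φz) s ≤ 2 * Real.exp ((1 / (2 * π)) *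
      ∫ u in (-π)..π, poissonKernelRT r (θ - u) * Real.log (ginv (youngConj (φ u)) s)) :=
  statement10_general φ hN t' hint hint' r θ hr0 hr1 φz hφz hinv
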